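/- For θ1 > 0, the cubic H(β) = 2(1 + θ1)β³ − 5θ1β² + 4θ1β − θ1 satisfies: the unique root β*(θ1) in (0, 1/2) is strictly increasing as a function of θ1, and β*(θ1) → 1/2 as θ1 → ∞ while β*(θ1) → 0 as θ1 → 0⁺. -/
import Mathlib


noncomputable def Hcubic (t1 b : ℝ) : ℝ := 2*(1+t1)*b^3 - 5*t1*b^2 + 4*t1*b - t1

lemma Dpos {x : ℝ} (hx : x < 1/2) : 0 < (1-2*x)*(1-x)^2 := by
  have h1 : 0 < 1 - 2*x := by linarith
  exact mul_pos h1 (pow_pos (by linarith) 2)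

lemma gmono {x y : ℝ} (hx : 0 < x) (hxy : x ≤ y) (hy : y < 1/2) :
    x^3*((1-2*y)*(1-y)^2) ≤ y^3*((1-2*x)*(1-x)^2) := by
  have hy0 : 0 < y := lt_of_lt_of_le hx hxy
  have hDy : (0:ℝ) ≤ (1-2*y)*(1-y)^2 := (Dpos hy).le
  have hD : (1-2*y)*(1-y)^2 ≤ (1-2*x)*(1-x)^2 := by
    apply mul_le_mul (by linarith) (pow_le_pow_left₀ (by linarith) (by linarith) 2)
      (by positivity) (by linarith)
  calc x^3*((1-2*y)*(1-y)^2) ≤ y^3*((1-2*y)*(1-y)^2) :=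
        mul_le_mul_of_nonneg_right (pow_le_pow_left₀ hx.le hxy 3) hDy
    _ ≤ y^3*((1-2*x)*(1-x)^2) :=
        mul_le_mul_of_nonneg_left hD (pow_nonneg hy0.le 3)

lemma Heq {t1 x : ℝ} (h : Hcubic t1 x = 0) : t1 * ((1-2*x)*(1-x)^2) = 2*x^3 := by
  unfold Hcubic at h; ring_nf at h ⊢; linarith

theorem stmt_18 (b : ℝ → ℝ)
    (hb : ∀ t1 : ℝ, 0 < t1 → b t1 ∈ Set.Ioo (0 : ℝ) (1/2) ∧ Hcubic t1 (b t1) = 0) :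
    StrictMonoOn b (Set.Ioi 0) ∧
    Filter.Tendsto b Filter.atTop (nhds (1/2)) ∧
    Filter.Tendsto b (nhdsWithin 0 (Set.Ioi 0)) (nhds 0) := by
  have key : ∀ t1 : ℝ, 0 < t1 →
      0 < b t1 ∧ b t1 < 1/2 ∧ t1 * ((1-2*(b t1))*(1-(b t1))^2) = 2*(b t1)^3 := by
    intro t1 ht
    obtain ⟨⟨h1, h2⟩, h3⟩ := hb t1 ht
    exact ⟨h1, h2, Heq h3⟩
  refine ⟨?_, ?_, ?_⟩
  · -- strict monotonicity
    intro s hs t ht hst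
    obtain ⟨hx0, hx2, hxe⟩ := key s hs
    obtain ⟨hy0, hy2, hye⟩ := key t ht
    set x := b s; set y := b t
    by_contra hcon
    push_neg at hcon
    have hmon := gmono hy0 hcon hx2
    have hDx : 0 < (1-2*x)*(1-x)^2 := Dpos hx2
    have hDy : 0 < (1-2*y)*(1-y)^2 := Dpos hy2
    have h1 : t * ((1-2*y)*(1-y)^2) * ((1-2*x)*(1-x)^2)
        ≤ s * ((1-2*x)*(1-x)^2) * ((1-2*y)*(1-y)^2) := by
      rw [hxe, hye]; nlinarith [hmon]
    have h2 : t * ((1-2*y)*(1-y)^2) ≤ s * ((1-2*y)*(1-y)^2) := by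
      nlinarith [mul_pos hDx hDy]
    have := mul_lt_mul_of_pos_right hst hDy
    linarith
  · -- tendsto 1/2 at top
    rw [Metric.tendsto_atTop]
    intro ε hε
    set ε' := min ε (1/4) with hε'def
    have hε'0 : 0 < ε' := lt_min hε (by norm_num)
    have hε'4 : ε' ≤ 1/4 := min_le_right _ _
    set c := 1/2 - ε' with hcdef
    have hc0 : 0 < c := by simp only [hcdef]; linarith
    have hc2 : c < 1/2 := by simp only [hcdef]; linarith
    have hDc : 0 < (1-2*c)*(1-c)^2 := Dpos hc2
    refine ⟨2*c^3/((1-2*c)*(1-c)^2) + 1, fun t ht => ?_⟩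
    have ht0 : 0 < t := lt_of_lt_of_le (by positivity) ht
    obtain ⟨hx0, hx2, hxe⟩ := key t ht0
    set x := b t
    have hDx : 0 < (1-2*x)*(1-x)^2 := Dpos hx2
    have hxc : c < x := by
      by_contra hcon
      push_neg at hcon
      have hmon := gmono hx0 hcon hc2
      -- t * Dx = 2x³, x³ Dc ≤ c³ Dx  ⟹ t Dx Dc ≤ 2c³ Dx ⟹ t Dc ≤ 2c³
      have h1 : t * ((1-2*c)*(1-c)^2) ≤ 2*c^3 := by
        nlinarith [mul_pos hDx hDc]
      have h2 : t ≤ 2*c^3/((1-2*c)*(1-c)^2) := by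
        rw [le_div_iff₀ hDc]; linarith
      linarith
    have : dist x (1/2) = 1/2 - x := by
      rw [Real.dist_eq, abs_of_nonpos (by linarith)]; ring
    rw [this]
    have : ε' ≤ ε := min_le_left _ _
    simp only [hcdef] at hxc
    linarith
  · -- tendsto 0 at 0⁺
    rw [Metric.tendsto_nhdsWithin_nhds]
    intro ε hε
    set ε' := min ε (1/4) with hε'def
    have hε'0 : 0 < ε' := lt_min hε (by norm_num)
    have hε'2 : ε' < 1/2 := lt_of_le_of_lt (min_le_right _ _) (by norm_num)
    have hDe : 0 < (1-2*ε')*(1-ε')^2 := Dpos hε'2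
    refine ⟨2*ε'^3/((1-2*ε')*(1-ε')^2), by positivity, fun t htmem hdist => ?_⟩
    have ht0 : 0 < t := htmem
    obtain ⟨hx0, hx2, hxe⟩ := key t ht0
    set x := b t
    have hDx : 0 < (1-2*x)*(1-x)^2 := Dpos hx2
    have htlt : t < 2*ε'^3/((1-2*ε')*(1-ε')^2) := by
      rw [Real.dist_eq, sub_zero, abs_of_pos ht0] at hdist
      exact hdist
    have hxe' : x < ε' := by
      by_contra hcon
      push_neg at hcon
      have hmon := gmono hε'0 hcon hx2
      -- ε'³ Dx ≤ x³ Dε' = (t Dx /2) Dε' ⟹ 2ε'³ ≤ t Dε'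
      have h1 : 2*ε'^3 ≤ t * ((1-2*ε')*(1-ε')^2) := by
        nlinarith [mul_pos hDx hDe]
      have : 2*ε'^3/((1-2*ε')*(1-ε')^2) ≤ t := by
        rw [div_le_iff₀ hDe]; linarith
      linarith
    rw [Real.dist_eq, sub_zero, abs_of_pos hx0]
    exact lt_of_lt_of_le hxe' (min_le_left _ _)
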